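/- Let a ∈ ℝ and let J, y : ℝ → ℝ³ be differentiable curves with y₁(u), y₂(u), y₃(u) ≠ 0 for all u, satisfying the rescaled Euler–Poisson equations dJ/du = (a²/2) (y × y⁻¹) and dy/du = −(1/2) (J × y⁻¹), where y⁻¹ = (1/y₁, 1/y₂, 1/y₃) and × is the cross product in ℝ³. Define the symmetric hollow matrix 𝒥(u) with rows [[0, J₃, J₂], [J₃, 0, J₁], [J₂, J₁, 0]], the antisymmetric matrix 𝒳(u) with rows [[0, y₃, −y₂], [−y₃, 0, y₁], [y₂, −y₁, 0]], and the symmetric hollow matrix M(u) with rows [[0, a/(2y₃), a/(2y₂)], [a/(2y₃), 0, a/(2y₁)], [a/(2y₂), a/(2y₁), 0]]. Then for every λ ∈ ℝ, the matrix L(λ,u) = λ I + 𝒥(u) + a 𝒳(u) satisfies the Lax equation dL/du = L M − M L. -/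

import Mathlib

open Matrix

attribute [local instance] Matrix.frobeniusNormedAddCommGroup Matrix.frobeniusNormedSpace

/-- The cross product in `ℝ³`. -/
def cross (u v : Fin 3 → ℝ) : Fin 3 → ℝ :=
  ![u 1 * v 2 - u 2 * v 1, u 2 * v 0 - u 0 * v 2, u 0 * v 1 - u 1 * v 0]

/-- The symmetric hollow matrix of angular momentum `𝒥_{ij} = |ε_{ijk}| J_k`. -/
def Jmat (J : Fin 3 → ℝ) : Matrix (Fin 3) (Fin 3) ℝ :=
  !![0, J 2, J 1; J 2, 0, J 0; J 1, J 0, 0]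

/-- The antisymmetric matrix of coordinates `𝒳_{ij} = ε_{ijk} y_k`. -/
def Xmat (y : Fin 3 → ℝ) : Matrix (Fin 3) (Fin 3) ℝ :=
  !![0, y 2, -y 1; -y 2, 0, y 0; y 1, -y 0, 0]

/-- The Lax matrix `L(λ) = λ I + 𝒥 + a 𝒳` of the deformed spherical top. -/
def LaxL (a lam : ℝ) (J y : Fin 3 → ℝ) : Matrix (Fin 3) (Fin 3) ℝ :=
  lam • (1 : Matrix (Fin 3) (Fin 3) ℝ) + Jmat J + a • Xmat y

/-- The second Lax matrix `M` of the deformed spherical top, the symmetric hollow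
matrix with entries `M_{ij} = |ε_{ijk}| a/(2 y_k)`. -/
noncomputable def LaxM (a : ℝ) (y : Fin 3 → ℝ) : Matrix (Fin 3) (Fin 3) ℝ :=
  !![0, a / (2 * y 2), a / (2 * y 1);
     a / (2 * y 2), 0, a / (2 * y 0);
     a / (2 * y 1), a / (2 * y 0), 0]

/-!
With `z = y⁻¹` the second Lax matrix is `M = (a/2) 𝒥(z)`. Two commutator identities,
`[𝒥(J), 𝒥(z)] = −𝒳(J × z)` and `[𝒳(y), 𝒥(z)] = 𝒥(y × z)` (the latter because `y_i z_i = 1`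
for every `i`), turn `[L, M]` into `𝒥((a²/2) y × z) + a 𝒳(−(1/2) J × z)`, which is the image of
`(dJ/du, dy/du)` under the linear map `(J, y) ↦ 𝒥(J) + a 𝒳(y)`, i.e. `dL/du`.
-/

def Jmat.linearMap : (Fin 3 → ℝ) →ₗ[ℝ] Matrix (Fin 3) (Fin 3) ℝ where
  toFun := Jmat
  map_add' x y := by ext i j; fin_cases i <;> fin_cases j <;> simp [Jmat]
  map_smul' c x := by ext i j; fin_cases i <;> fin_cases j <;> simp [Jmat]

def Xmat.linearMap : (Fin 3 → ℝ) →ₗ[ℝ] Matrix (Fin 3) (Fin 3) ℝ where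
  toFun := Xmat
  map_add' x y := by ext i j; fin_cases i <;> fin_cases j <;> simp [Xmat, add_comm]
  map_smul' c x := by ext i j; fin_cases i <;> fin_cases j <;> simp [Xmat]

theorem Jmat_smul (c : ℝ) (J : Fin 3 → ℝ) : Jmat (c • J) = c • Jmat J :=
  Jmat.linearMap.map_smul c J

theorem Xmat_smul (c : ℝ) (y : Fin 3 → ℝ) : Xmat (c • y) = c • Xmat y :=
  Xmat.linearMap.map_smul c y

theorem Jmat_mul_Jmat_sub (J z : Fin 3 → ℝ) :
    Jmat J * Jmat z - Jmat z * Jmat J = -Xmat (cross J z) := by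
  ext i j
  simp only [Matrix.sub_apply, Matrix.mul_apply, Fin.sum_univ_three]
  fin_cases i <;> fin_cases j <;> simp [Jmat, Xmat, cross] <;> ring

/-- Only the diagonal of the commutator, `2 (y₂z₂ − y₁z₁, y₀z₀ − y₂z₂, y₁z₁ − y₀z₀)`, needs
`hyz`. -/
theorem Xmat_mul_Jmat_sub {y z : Fin 3 → ℝ} (hyz : ∀ i j, y i * z i = y j * z j) :
    Xmat y * Jmat z - Jmat z * Xmat y = Jmat (cross y z) := by
  have h01 := hyz 0 1
  have h12 := hyz 1 2
  ext i j
  simp only [Matrix.sub_apply, Matrix.mul_apply, Fin.sum_univ_three]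
  fin_cases i <;> fin_cases j <;> simp [Jmat, Xmat, cross] <;> linarith

theorem LaxM_eq_smul_Jmat_inv (a : ℝ) (y : Fin 3 → ℝ) :
    LaxM a y = (a / 2) • Jmat (fun i => (y i)⁻¹) := by
  ext i j
  fin_cases i <;> fin_cases j <;> simp [LaxM, Jmat, div_eq_mul_inv] <;> ring

theorem LaxL_mul_LaxM_sub {y : Fin 3 → ℝ} (hy : ∀ i, y i ≠ 0) (a lam : ℝ) (J : Fin 3 → ℝ) :
    LaxL a lam J y * LaxM a y - LaxM a y * LaxL a lam J y =
      Jmat ((a ^ 2 / 2) • cross y (fun i => (y i)⁻¹)) +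
        a • Xmat (-((1 : ℝ) / 2) • cross J (fun i => (y i)⁻¹)) := by
  set z : Fin 3 → ℝ := fun i => (y i)⁻¹
  have hyz : ∀ i j, y i * z i = y j * z j := fun i j => by
    simp only [z, mul_inv_cancel₀ (hy i), mul_inv_cancel₀ (hy j)]
  have hJ : Xmat (cross J z) = Jmat z * Jmat J - Jmat J * Jmat z := by
    rw [← neg_sub, Jmat_mul_Jmat_sub, neg_neg]
  rw [LaxM_eq_smul_Jmat_inv, Jmat_smul, Xmat_smul, hJ, ← Xmat_mul_Jmat_sub hyz]
  simp only [LaxL, add_mul, mul_add, Matrix.smul_mul, Matrix.mul_smul, Matrix.one_mul,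
    Matrix.mul_one]
  module

theorem hasDerivAt_LaxL {J y : ℝ → Fin 3 → ℝ} {J' y' : Fin 3 → ℝ} {u : ℝ}
    (hJ : HasDerivAt J J' u) (hy : HasDerivAt y y' u) (a lam : ℝ) :
    HasDerivAt (fun s => LaxL a lam (J s) (y s)) (Jmat J' + a • Xmat y') u := by
  have hJmat := Jmat.linearMap.toContinuousLinearMap.hasFDerivAt.comp_hasDerivAt u hJ
  have hXmat := Xmat.linearMap.toContinuousLinearMap.hasFDerivAt.comp_hasDerivAt u hy
  have h := ((hasDerivAt_const u (lam • (1 : Matrix (Fin 3) (Fin 3) ℝ))).add hJmat).add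
    (hXmat.const_smul a)
  rw [zero_add] at h
  exact h

/-- The rescaled Euler–Poisson equations `dJ/du = (a²/2)(y × y⁻¹)`,
`dy/du = −(1/2)(J × y⁻¹)` of the deformed spherical top imply the Lax equation
`dL/du = [L, M] = LM − ML` for every value of the spectral parameter `λ`. -/
theorem deformed_top_lax_representation (a : ℝ)
    (J y : ℝ → Fin 3 → ℝ)
    (hy0 : ∀ u, y u 0 ≠ 0 ∧ y u 1 ≠ 0 ∧ y u 2 ≠ 0)
    (hJ : ∀ u, HasDerivAt J ((a ^ 2 / 2) • cross (y u) (fun i => (y u i)⁻¹)) u)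
    (hy : ∀ u, HasDerivAt y (-((1 : ℝ) / 2) • cross (J u) (fun i => (y u i)⁻¹)) u) :
    ∀ lam : ℝ, ∀ u : ℝ,
      HasDerivAt (fun s => LaxL a lam (J s) (y s))
        (LaxL a lam (J u) (y u) * LaxM a (y u) -
          LaxM a (y u) * LaxL a lam (J u) (y u)) u := by
  intro lam u
  obtain ⟨h0, h1, h2⟩ := hy0 u
  rw [LaxL_mul_LaxM_sub (by simp [Fin.forall_fin_succ, *])]
  exact hasDerivAt_LaxL (hJ u) (hy u) a lam
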